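/- arXiv:1709.01345 — 4 statements merged into one kernel-verified Lean document; each statement's English description precedes it below -/
import Mathlib

section
/- For each j ∈ ℕ, the polynomial x^(2^(j+1)−2) does not belong to the smallest subset of ℤ[x] containing {x^(2^(i+1)−2) : i ∈ ℕ, i ≠ j} that is closed under addition, negation, and composition of polynomials. -/
/-!
Reduce modulo 2. In characteristic 2, if all exponents of `f` and `g` are even then
`f = F(x²)`, `g = G(x²)` and, by Frobenius, `g² = G'(x⁴)`; so `f ∘ g = F(g²)` has only exponents
divisible by 4. Hence every element of the generated nearring reduces to a polynomial supported in
`4ℕ ∪ {2^(i+1) - 2 : i ≠ j}`, whereas for `j ≥ 1` the exponent `2^(j+1) - 2 ≡ 2 (mod 4)` lies in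
neither part.
-/

open Polynomial

/-- Membership in the subnearring of `(ℤ[x], +, ∘)` generated by `S`:
the smallest subset of `ℤ[x]` containing `S` that is an additive subgroup
and is closed under composition of polynomials. -/
inductive NRGen (S : Set (Polynomial ℤ)) : Polynomial ℤ → Prop
  | mem {p : Polynomial ℤ} : p ∈ S → NRGen S p
  | zero : NRGen S 0
  | add {p q : Polynomial ℤ} : NRGen S p → NRGen S q → NRGen S (p + q)
  | neg {p : Polynomial ℤ} : NRGen S p → NRGen S (-p)
  | comp {p q : Polynomial ℤ} : NRGen S p → NRGen S q → NRGen S (p.comp q)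

namespace Polynomial

variable {R : Type*} [CommSemiring R]

theorem expand_contract_of_forall_dvd {p : ℕ} (hp : p ≠ 0) {f : R[X]}
    (hf : ∀ n ∈ f.support, p ∣ n) : expand R p (contract p f) = f := by
  ext n
  rw [coeff_expand hp.bot_lt, coeff_contract hp]
  split_ifs with h
  · rw [Nat.div_mul_cancel h]
  · exact (notMem_support_iff.mp (mt (hf n) h)).symm

theorem dvd_of_mem_support_expand {p : ℕ} (hp : 0 < p) {f : R[X]} {n : ℕ}
    (hn : n ∈ (expand R p f).support) : p ∣ n := by
  by_contra h
  rw [mem_support_iff, coeff_expand hp, if_neg h] at hn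
  exact hn rfl

theorem comp_expand (f g : R[X]) (p : ℕ) : f.comp (expand R p g) = expand R p (f.comp g) := by
  simp only [expand_eq_comp_X_pow, comp_assoc]

theorem expand_comp_expand (p : ℕ) [ExpChar R p] (f g : R[X]) :
    (expand R p f).comp (expand R p g) = expand R (p ^ 2) (f.comp (map (frobenius R p) g)) := by
  rw [expand_eq_comp_X_pow, comp_assoc, X_pow_comp, ← map_frobenius_expand, expand_expand,
    map_expand, ← sq, comp_expand]

theorem sq_dvd_of_mem_support_comp (p : ℕ) [ExpChar R p] {f g : R[X]}
    (hf : ∀ n ∈ f.support, p ∣ n) (hg : ∀ n ∈ g.support, p ∣ n) :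
    ∀ n ∈ (f.comp g).support, p ^ 2 ∣ n := by
  have hp : p ≠ 0 := (expChar_pos R p).ne'
  rw [← expand_contract_of_forall_dvd hp hf, ← expand_contract_of_forall_dvd hp hg,
    expand_comp_expand]
  exact fun n => dvd_of_mem_support_expand (pow_pos hp.bot_lt 2)

end Polynomial

theorem NRGen.coe_support_map_subset {R : Type*} [CommRing R] (p : ℕ) [ExpChar R p]
    {E : Set ℕ} (hE : ∀ n ∈ E, p ∣ n) (hE' : ∀ n, p ^ 2 ∣ n → n ∈ E)
    {S : Set ℤ[X]} (hS : ∀ q ∈ S, ↑(q.map (Int.castRingHom R)).support ⊆ E) {q : ℤ[X]}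
    (hq : NRGen S q) : ↑(q.map (Int.castRingHom R)).support ⊆ E := by
  induction hq with
  | mem h => exact hS _ h
  | zero => simp
  | add _ _ ihf ihg =>
    rw [Polynomial.map_add]
    refine (Finset.coe_subset.mpr support_add).trans ?_
    rw [Finset.coe_union]
    exact Set.union_subset ihf ihg
  | neg _ ih => rwa [Polynomial.map_neg, support_neg]
  | comp _ _ ihf ihg =>
    rw [Polynomial.map_comp]
    exact fun n hn => hE' n (sq_dvd_of_mem_support_comp p (fun m hm => hE m (ihf hm))
      (fun m hm => hE m (ihg hm)) n hn)

theorem two_dvd_two_pow_succ_sub_two (i : ℕ) : 2 ∣ 2 ^ (i + 1) - 2 :=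
  Nat.dvd_sub (dvd_pow_self 2 i.succ_ne_zero) dvd_rfl

theorem not_four_dvd_two_pow_succ_sub_two {i : ℕ} (hi : 0 < i) : ¬ 4 ∣ 2 ^ (i + 1) - 2 := by
  obtain ⟨k, rfl⟩ : ∃ k, i = k + 1 := ⟨i - 1, by omega⟩
  have : 2 ^ (k + 1 + 1) = 4 * 2 ^ k := by ring
  have : 1 ≤ 2 ^ k := Nat.one_le_two_pow
  omega

theorem two_pow_succ_sub_two_injective : Function.Injective fun i : ℕ => 2 ^ (i + 1) - 2 := by
  intro i j h
  have : 2 ≤ 2 ^ (i + 1) := Nat.le_self_pow i.succ_ne_zero 2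
  have : 2 ≤ 2 ^ (j + 1) := Nat.le_self_pow j.succ_ne_zero 2
  have : 2 ^ (i + 1) = 2 ^ (j + 1) := by simp only at h; omega
  exact Nat.succ_injective (Nat.pow_right_injective le_rfl this)

theorem pj_not_in_gen_of_others (j : ℕ+) :
    ¬ NRGen {q : Polynomial ℤ | ∃ i : ℕ+, i ≠ j ∧ q = X ^ (2 ^ ((i : ℕ) + 1) - 2)}
      (X ^ (2 ^ ((j : ℕ) + 1) - 2)) := by
  have hX (n : ℕ) : (↑((X ^ n : ℤ[X]).map (Int.castRingHom (ZMod 2))).support : Set ℕ) = {n} := by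
    rw [Polynomial.map_pow, map_X, support_X_pow, Finset.coe_singleton]
  intro h
  have hsupp := NRGen.coe_support_map_subset (R := ZMod 2) 2
    (E := {n | 4 ∣ n ∨ ∃ i : ℕ+, i ≠ j ∧ n = 2 ^ ((i : ℕ) + 1) - 2}) ?_ (fun n => Or.inl) ?_ h
  · rw [hX, Set.singleton_subset_iff] at hsupp
    rcases hsupp with h4 | ⟨i, hij, hi⟩
    · exact not_four_dvd_two_pow_succ_sub_two j.pos h4
    · exact hij (PNat.coe_injective (two_pow_succ_sub_two_injective hi).symm)
  · rintro n (h4 | ⟨i, -, rfl⟩)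
    · exact (dvd_mul_right 2 2).trans h4
    · exact two_dvd_two_pow_succ_sub_two i
  · rintro q ⟨i, hij, rfl⟩
    rw [hX, Set.singleton_subset_iff]
    exact Or.inr ⟨i, hij, rfl⟩
end

section
/- Let N be a (right) nearring, let a ∈ N be right cancellable (x ∘ a = y ∘ a implies x = y), and let e be a left identity (e ∘ x = x for all x). Let F be the subnearring generated by {a} and G the subnearring generated by {a, e}. Then G = { n ∈ N : n ∘ a ∈ F }. -/
/-- `T` is a subnearring of the (right) nearring `(N, +, mul)`. -/
def IsSubNR {N : Type*} [AddGroup N] (mul : N → N → N) (T : Set N) : Prop :=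
  (0 : N) ∈ T ∧ (∀ a ∈ T, ∀ b ∈ T, a + b ∈ T) ∧ (∀ a ∈ T, -a ∈ T) ∧
    (∀ a ∈ T, ∀ b ∈ T, mul a b ∈ T)

/-- The subnearring generated by `S`: the smallest subset containing `S` that is
an additive subgroup closed under `mul`. -/
def nrGen {N : Type*} [AddGroup N] (mul : N → N → N) (S : Set N) : Set N :=
  ⋂₀ {T | S ⊆ T ∧ IsSubNR mul T}

/-!
The left multipliers of `F`, `{x | x ∘ F ⊆ F}`, form a subnearring containing `a` and `e`,
hence `G`; this gives `G ∘ a ⊆ F`. Conversely `G ∘ a` is a subnearring containing `a = e ∘ a`,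
hence `F`, so `n ∘ a ∈ F` gives `n ∘ a = g ∘ a` with `g ∈ G`, and right cancellation of `a`
yields `n = g`.
-/

section

variable {N : Type*} [AddGroup N] {mul : N → N → N}

theorem zero_mul_of_right_distrib (hdist : ∀ a b c : N, mul (a + b) c = mul a c + mul b c)
    (x : N) : mul 0 x = 0 := by
  simpa using hdist 0 0 x

theorem neg_mul_of_right_distrib (hdist : ∀ a b c : N, mul (a + b) c = mul a c + mul b c)
    (x y : N) : mul (-x) y = -mul x y := by
  have h := hdist x (-x) y
  rw [add_neg_cancel, zero_mul_of_right_distrib hdist] at h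
  exact eq_neg_of_add_eq_zero_right h.symm

theorem subset_nrGen (S : Set N) : S ⊆ nrGen mul S :=
  fun _ hx => Set.mem_sInter.2 fun _ hT => hT.1 hx

theorem nrGen_subset {S T : Set N} (hST : S ⊆ T) (hT : IsSubNR mul T) : nrGen mul S ⊆ T :=
  Set.sInter_subset_of_mem ⟨hST, hT⟩

theorem isSubNR_nrGen (S : Set N) : IsSubNR mul (nrGen mul S) := by
  refine ⟨fun T hT => hT.2.1, ?_, ?_, ?_⟩
  · exact fun x hx y hy T hT => hT.2.2.1 x (hx T hT) y (hy T hT)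
  · exact fun x hx T hT => hT.2.2.2.1 x (hx T hT)
  · exact fun x hx y hy T hT => hT.2.2.2.2 x (hx T hT) y (hy T hT)

theorem IsSubNR.setOf_forall_mul_mem (hassoc : ∀ a b c : N, mul (mul a b) c = mul a (mul b c))
    (hdist : ∀ a b c : N, mul (a + b) c = mul a c + mul b c) {F : Set N}
    (hF : IsSubNR mul F) : IsSubNR mul {x | ∀ f ∈ F, mul x f ∈ F} := by
  obtain ⟨hF0, hFadd, hFneg, -⟩ := hF
  refine ⟨?_, ?_, ?_, ?_⟩
  · intro f _
    rw [zero_mul_of_right_distrib hdist]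
    exact hF0
  · intro x hx y hy f hf
    rw [hdist]
    exact hFadd _ (hx f hf) _ (hy f hf)
  · intro x hx f hf
    rw [neg_mul_of_right_distrib hdist]
    exact hFneg _ (hx f hf)
  · intro x hx y hy f hf
    rw [hassoc]
    exact hx _ (hy f hf)

theorem IsSubNR.image_mul_right (hassoc : ∀ a b c : N, mul (mul a b) c = mul a (mul b c))
    (hdist : ∀ a b c : N, mul (a + b) c = mul a c + mul b c) {G : Set N} {a : N}
    (hG : IsSubNR mul G) (ha : a ∈ G) : IsSubNR mul ((mul · a) '' G) := by
  obtain ⟨hG0, hGadd, hGneg, hGmul⟩ := hG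
  refine ⟨⟨0, hG0, zero_mul_of_right_distrib hdist a⟩, ?_, ?_, ?_⟩
  · rintro _ ⟨g, hg, rfl⟩ _ ⟨g', hg', rfl⟩
    exact ⟨g + g', hGadd _ hg _ hg', hdist g g' a⟩
  · rintro _ ⟨g, hg, rfl⟩
    exact ⟨-g, hGneg _ hg, neg_mul_of_right_distrib hdist g a⟩
  · rintro _ ⟨g, hg, rfl⟩ _ ⟨g', hg', rfl⟩
    refine ⟨mul g (mul a g'), hGmul _ hg _ (hGmul _ ha _ hg'), ?_⟩
    simp only [hassoc]

end

theorem gen_with_identity {N : Type*} [AddGroup N] (mul : N → N → N)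
    (hassoc : ∀ a b c : N, mul (mul a b) c = mul a (mul b c))
    (hdist : ∀ a b c : N, mul (a + b) c = mul a c + mul b c)
    (a e : N)
    (hcanc : ∀ x y : N, mul x a = mul y a → x = y)
    (hid : ∀ x : N, mul e x = x) :
    nrGen mul {a, e} = {n : N | mul n a ∈ nrGen mul {a}} := by
  have haF : a ∈ nrGen mul {a} := subset_nrGen {a} rfl
  have haG : a ∈ nrGen mul {a, e} := subset_nrGen {a, e} (.inl rfl)
  have heG : e ∈ nrGen mul {a, e} := subset_nrGen {a, e} (.inr rfl)
  ext n
  constructor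
  · intro hn
    have hmul : ({a, e} : Set N) ⊆ {x | ∀ f ∈ nrGen mul {a}, mul x f ∈ nrGen mul {a}} := by
      rintro x (rfl | rfl) f hf
      · exact (isSubNR_nrGen _).2.2.2 _ haF _ hf
      · rwa [hid]
    exact nrGen_subset hmul ((isSubNR_nrGen _).setOf_forall_mul_mem hassoc hdist) hn a haF
  · intro hn
    have hea : ({a} : Set N) ⊆ (mul · a) '' nrGen mul {a, e} :=
      Set.singleton_subset_iff.2 ⟨e, heG, hid a⟩
    obtain ⟨g, hg, hga⟩ :=
      nrGen_subset hea ((isSubNR_nrGen _).image_mul_right hassoc hdist haG) hn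
    rwa [hcanc n g hga.symm]
end

section
/- A polynomial p = Σᵢ cᵢxⁱ ∈ ℤ[x] lies in the subnearring of (ℤ[x], +, ∘) generated by {1, x², x³} if and only if c₁ = 0 and 2 divides c₅. -/
/-!
If `q` has no linear term then neither has `p ∘ q`, since its linear coefficient is
`p'(q(0)) q₁`; and the coefficient of `x⁵` in `q ^ k` is `k q₀ᵏ⁻¹ q₅ + k (k - 1) q₀ᵏ⁻² q₂ q₃`,
which is even when `q₅` is. Hence the polynomials with `c₁ = 0` and `2 ∣ c₅` form a
subnearring containing `1, x², x³`.

Conversely, a subnearring containing `x²` and `x³` contains `2pq = (p + q)² - p² - q²` and then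
`p²q + pq² = (p + q)³ - p³ - q³ - 2p²q - 2pq²` along with `p` and `q`. For monomials this gives
`x²ᵃ⁺ᵇ` from `xᵃ`, `xᵇ` and `xᵃ⁺²ᵇ`, which produces every `xⁿ` with `n ≠ 1, 5` by induction,
while `2x⁵ = 2 x² x³`.
-/

open Polynomial

open Finset

section Coefficients

variable {R : Type*} [CommRing R]

theorem coeff_one_comp (p q : R[X]) :
    (p.comp q).coeff 1 = p.derivative.eval (q.coeff 0) * q.coeff 1 := by
  have h := congrArg (fun f : R[X] => f.coeff 0) (derivative_comp p q)
  simp only [coeff_derivative, mul_coeff_zero] at h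
  rw [coeff_zero_eq_eval_zero (p.derivative.comp q), eval_comp, ← coeff_zero_eq_eval_zero] at h
  simpa [mul_comm] using h

theorem coeff_one_comp_eq_zero (p : R[X]) {q : R[X]} (hq : q.coeff 1 = 0) :
    (p.comp q).coeff 1 = 0 := by
  rw [coeff_one_comp, hq, mul_zero]

theorem coeff_one_pow_eq_zero {q : R[X]} (hq : q.coeff 1 = 0) (k : ℕ) :
    (q ^ k).coeff 1 = 0 := by
  simpa using coeff_one_comp_eq_zero (X ^ k) hq

theorem two_dvd_coeff_five_pow {q : R[X]} (hq1 : q.coeff 1 = 0) (hq5 : 2 ∣ q.coeff 5) (k : ℕ) :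
    2 ∣ (q ^ k).coeff 5 := by
  -- `(q ^ k)₂ : (q ^ k)₃ = q₂ : q₃` makes the two mixed terms of `(q ^ (k + 1))₅` equal.
  suffices h : (q ^ k).coeff 2 * q.coeff 3 = (q ^ k).coeff 3 * q.coeff 2 ∧
      2 ∣ (q ^ k).coeff 5 from h.2
  induction k with
  | zero => simp [coeff_one]
  | succ k ih =>
    obtain ⟨hcross, hdvd⟩ := ih
    simp only [pow_succ, coeff_mul, Nat.sum_antidiagonal_eq_sum_range_succ_mk, sum_range_succ,
      sum_range_zero, Nat.reduceSub, coeff_one_pow_eq_zero hq1 k, hq1, mul_zero, zero_mul,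
      add_zero, zero_add]
    refine ⟨by linear_combination q.coeff 0 * hcross, ?_⟩
    have hsplit : (q ^ k).coeff 0 * q.coeff 5 + (q ^ k).coeff 2 * q.coeff 3
        + (q ^ k).coeff 3 * q.coeff 2 + (q ^ k).coeff 5 * q.coeff 0
        = (q ^ k).coeff 0 * q.coeff 5 + 2 * ((q ^ k).coeff 3 * q.coeff 2)
        + (q ^ k).coeff 5 * q.coeff 0 := by
      linear_combination hcross
    rw [hsplit]
    exact dvd_add (dvd_add (dvd_mul_of_dvd_right hq5 _) (dvd_mul_right 2 _))
      (dvd_mul_of_dvd_left hdvd _)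

theorem two_dvd_coeff_five_comp (p : R[X]) {q : R[X]} (hq1 : q.coeff 1 = 0)
    (hq5 : 2 ∣ q.coeff 5) : 2 ∣ (p.comp q).coeff 5 := by
  rw [comp_eq_sum_left, Polynomial.sum, finsetSum_coeff]
  exact dvd_sum fun k _ => by
    rw [coeff_C_mul]
    exact dvd_mul_of_dvd_right (two_dvd_coeff_five_pow hq1 hq5 k) _

end Coefficients

namespace NRGen

variable {S : Set ℤ[X]} {p q : ℤ[X]}

def toAddSubgroup (S : Set ℤ[X]) : AddSubgroup ℤ[X] where
  carrier := {p | NRGen S p}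
  zero_mem' := .zero
  add_mem' := .add
  neg_mem' := .neg

theorem sub (hp : NRGen S p) (hq : NRGen S q) : NRGen S (p - q) :=
  (toAddSubgroup S).sub_mem hp hq

theorem C_mul (c : ℤ) (hp : NRGen S p) : NRGen S (C c * p) := by
  rw [← smul_eq_C_mul]
  exact (toAddSubgroup S).zsmul_mem hp c

theorem pow (n : ℕ) (hn : X ^ n ∈ S) (hp : NRGen S p) : NRGen S (p ^ n) := by
  simpa using (mem hn).comp hp

theorem X_pow_mul (n : ℕ) (hn : X ^ n ∈ S) {m : ℕ} (hm : NRGen S (X ^ m)) :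
    NRGen S (X ^ (n * m)) := by
  simpa [← pow_mul'] using hm.pow n hn

theorem two_mul_mul (h2 : X ^ 2 ∈ S) (hp : NRGen S p) (hq : NRGen S q) :
    NRGen S (2 * (p * q)) := by
  convert (((hp.add hq).pow 2 h2).sub (hp.pow 2 h2)).sub (hq.pow 2 h2) using 1
  ring

theorem sq_mul_add_mul_sq (h2 : X ^ 2 ∈ S) (h3 : X ^ 3 ∈ S) (hp : NRGen S p)
    (hq : NRGen S q) : NRGen S (p ^ 2 * q + p * q ^ 2) := by
  have hcube := (((hp.add hq).pow 3 h3).sub (hp.pow 3 h3)).sub (hq.pow 3 h3)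
  convert (hcube.sub ((hp.pow 2 h2).two_mul_mul h2 hq)).sub
    (hp.two_mul_mul h2 (hq.pow 2 h2)) using 1
  ring

theorem X_pow_of_X_pow (h2 : X ^ 2 ∈ S) (h3 : X ^ 3 ∈ S) {a b c n : ℕ} (hc : a + 2 * b = c)
    (hn : 2 * a + b = n) (ha : NRGen S (X ^ a)) (hb : NRGen S (X ^ b))
    (hab : NRGen S (X ^ c)) : NRGen S (X ^ n) := by
  subst hc hn
  convert (sq_mul_add_mul_sq h2 h3 ha hb).sub hab using 1
  ring

theorem X_pow (h1 : 1 ∈ S) (h2 : X ^ 2 ∈ S) (h3 : X ^ 3 ∈ S) {n : ℕ} (hn1 : n ≠ 1)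
    (hn5 : n ≠ 5) : NRGen S (X ^ n) := by
  induction n using Nat.strong_induction_on with
  | _ n ih =>
  have hlt {m : ℕ} (hm : m < n) (hm1 : m ≠ 1 := by omega) (hm5 : m ≠ 5 := by omega) :
      NRGen S (X ^ m) := ih m hm hm1 hm5
  obtain ⟨m, rfl | rfl⟩ := Nat.even_or_odd' n
  · rcases (show m = 0 ∨ m = 1 ∨ m = 5 ∨ (m ≠ 1 ∧ m ≠ 5 ∧ 0 < m) by omega)
      with rfl | rfl | rfl | ⟨hm1, hm5, hm0⟩
    · simpa using mem h1
    · exact mem h2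
    · exact X_pow_of_X_pow (a := 4) (b := 2) h2 h3 rfl rfl (hlt (by omega)) (mem h2)
        (hlt (by omega))
    · exact X_pow_mul 2 h2 (hlt (by omega))
  · rcases (show m = 1 ∨ m = 3 ∨ m = 4 ∨ m = 6 ∨ (5 ≤ m ∧ m ≠ 6) by omega)
      with rfl | rfl | rfl | rfl | ⟨hm5, hm6⟩
    · exact mem h3
    · exact X_pow_of_X_pow (a := 2) (b := 3) h2 h3 rfl rfl (mem h2) (mem h3)
        (X_pow_mul 2 h2 (hlt (m := 4) (by omega)))
    · exact X_pow_mul 3 h3 (mem h3)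
    -- `x¹³` is reached through the larger `x²⁰ = (x¹⁰)²`.
    · exact X_pow_of_X_pow (a := 2) (b := 9) h2 h3 rfl rfl (mem h2) (hlt (by omega))
        (X_pow_mul 2 h2 (hlt (m := 10) (by omega)))
    · exact X_pow_of_X_pow (a := m - 1) (b := 3) h2 h3 rfl (by omega) (hlt (by omega)) (mem h3)
        (hlt (by omega))

theorem monomial (h1 : 1 ∈ S) (h2 : X ^ 2 ∈ S) (h3 : X ^ 3 ∈ S) {n : ℕ} {c : ℤ}
    (hc1 : n = 1 → c = 0) (hc5 : n = 5 → 2 ∣ c) : NRGen S (monomial n c) := by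
  rw [← C_mul_X_pow_eq_monomial]
  by_cases hn1 : n = 1
  · simp [hc1 hn1, zero]
  by_cases hn5 : n = 5
  · obtain ⟨d, rfl⟩ := hc5 hn5
    subst hn5
    convert C_mul d (two_mul_mul h2 (mem h2) (mem h3)) using 1
    rw [map_mul, map_ofNat]
    ring
  · exact C_mul c (X_pow h1 h2 h3 hn1 hn5)

end NRGen

theorem mem_gen_1_x2_x3 (p : Polynomial ℤ) :
    NRGen {1, X ^ 2, X ^ 3} p ↔ p.coeff 1 = 0 ∧ 2 ∣ p.coeff 5 := by
  constructor
  · intro hp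
    induction hp with
    | mem h => rcases h with rfl | rfl | rfl <;> simp [coeff_one, coeff_X_pow]
    | zero => simp
    | add _ _ ihp ihq => exact ⟨by simp [ihp.1, ihq.1], by simpa using dvd_add ihp.2 ihq.2⟩
    | neg _ ih => exact ⟨by simp [ih.1], by simpa using ih.2.neg_right⟩
    | comp _ _ _ ihq =>
      exact ⟨coeff_one_comp_eq_zero _ ihq.1, two_dvd_coeff_five_comp _ ihq.1 ihq.2⟩
  · rintro ⟨h1, h5⟩
    rw [p.as_sum_support]
    exact (NRGen.toAddSubgroup _).sum_mem fun n _ =>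
      NRGen.monomial (by simp) (by simp) (by simp) (fun hn => hn ▸ h1) (fun hn => hn ▸ h5)
end

section
/- A polynomial p = Σᵢ cᵢxⁱ ∈ ℤ[x] lies in the subnearring of (ℤ[x], +, ∘) generated by {1, x²} if and only if all odd-indexed coefficients vanish and for every i ≥ 1, 2^(s₂(i)−1) divides c_{2i}, where s₂(i) is the binary digit sum of i. -/
open Polynomial

/-!
Let `A` be the additive group spanned by the polynomials `2^(s₂(i)-1) X^(2i)`; the coefficient
condition says exactly that `p ∈ A`. Since `s₂(i+j) ≤ s₂(i) + s₂(j)` (Legendre) and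
`s₂(2i) = s₂(i)`, the group `A` is closed under `(f, g) ↦ 2fg` and under squaring.
Conversely, an additive group `N` closed under squaring is closed under
`(f, g) ↦ 2fg = (f+g)² - f² - g²`, so by induction on the binary expansion of `i` it contains
`2^(s₂(i)-1) r^i` whenever `r ∈ N`. With `r = q²` this puts `p ∘ q` in `N` for every `p ∈ A`,
provided `N` contains the constants and `q²`. Taking `N = A` shows that `A` is a subnearring
containing `1` and `X²`; taking `N` the generated subnearring and `q = X` shows `A ⊆ N`.
-/

namespace Nat

theorem digits_two_sum_two_mul (n : ℕ) : (digits 2 (2 * n)).sum = (digits 2 n).sum := by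
  rcases n.eq_zero_or_pos with rfl | hn
  · rfl
  · rw [digits_def' one_lt_two (by omega)]
    simp

theorem digits_two_sum_two_mul_add_one (n : ℕ) :
    (digits 2 (2 * n + 1)).sum = (digits 2 n).sum + 1 := by
  rw [digits_def' one_lt_two (by omega)]
  simp [add_comm, Nat.add_mul_div_left]

theorem digits_sum_pos {b n : ℕ} (hn : n ≠ 0) : 0 < (digits b n).sum := by
  refine Nat.pos_of_ne_zero fun h => getLast_digit_ne_zero b hn ?_
  exact List.sum_eq_zero_iff.mp h _ (List.getLast_mem _)

theorem digits_two_sum_add_le (m n : ℕ) :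
    (digits 2 (m + n)).sum ≤ (digits 2 m).sum + (digits 2 n).sum := by
  have hval (k : ℕ) : padicValNat 2 k ! = k - (digits 2 k).sum := by
    simpa using sub_one_mul_padicValNat_factorial (p := 2) k
  have hsplit : padicValNat 2 (m + n)! =
      padicValNat 2 ((m + n).choose n) + padicValNat 2 m ! + padicValNat 2 n ! := by
    rw [← add_choose_mul_factorial_mul_factorial,
      padicValNat.mul (mul_ne_zero (choose_pos (by omega)).ne' (factorial_ne_zero _))
        (factorial_ne_zero _),
      padicValNat.mul (choose_pos (by omega)).ne' (factorial_ne_zero _)]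
  have := hval m
  have := hval n
  have := hval (m + n)
  have := digit_sum_le 2 m
  have := digit_sum_le 2 n
  have := digit_sum_le 2 (m + n)
  omega

end Nat

namespace AddSubgroup

variable {R : Type*} [CommRing R] {N : AddSubgroup R}

theorem two_mul_mul_mem (hN : ∀ f ∈ N, f ^ 2 ∈ N) {f g : R} (hf : f ∈ N) (hg : g ∈ N) :
    2 * (f * g) ∈ N := by
  have h : 2 * (f * g) = (f + g) ^ 2 - f ^ 2 - g ^ 2 := by ring
  rw [h]
  exact sub_mem (sub_mem (hN _ (add_mem hf hg)) (hN f hf)) (hN g hg)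

theorem two_pow_mul_pow_mem (hN : ∀ f ∈ N, f ^ 2 ∈ N) {r : R} (hr : r ∈ N) {i : ℕ}
    (hi : i ≠ 0) : 2 ^ ((Nat.digits 2 i).sum - 1) * r ^ i ∈ N := by
  induction i using Nat.strong_induction_on generalizing r with
  | _ i ih =>
    obtain ⟨j, rfl | rfl⟩ := i.even_or_odd'
    · have hj : j ≠ 0 := by omega
      rw [Nat.digits_two_sum_two_mul, pow_mul]
      exact ih j (by omega) (hN r hr) hj
    · rcases eq_or_ne j 0 with rfl | hj
      · simpa using hr
      obtain ⟨k, hk⟩ : ∃ k, (Nat.digits 2 j).sum = k + 1 :=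
        ⟨_, (Nat.succ_pred_eq_of_pos (Nat.digits_sum_pos hj)).symm⟩
      have h := two_mul_mul_mem hN (ih (2 * j) (by omega) hr (by omega)) hr
      rw [Nat.digits_two_sum_two_mul, hk] at h
      rw [Nat.digits_two_sum_two_mul_add_one, hk]
      convert h using 1
      simp only [add_tsub_cancel_right]
      ring

end AddSubgroup

/-- Since `0 - 1 = 0` in `ℕ`, `admissibleMonomial 0 = 1`. -/
noncomputable def admissibleMonomial (i : ℕ) : ℤ[X] :=
  monomial (2 * i) (2 ^ ((Nat.digits 2 i).sum - 1))

noncomputable def admissible : AddSubgroup ℤ[X] :=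
  AddSubgroup.closure (Set.range admissibleMonomial)

theorem admissibleMonomial_zero : admissibleMonomial 0 = 1 := by
  simp [admissibleMonomial]

theorem admissibleMonomial_one : admissibleMonomial 1 = X ^ 2 := by
  simp [admissibleMonomial, X_pow_eq_monomial]

theorem monomial_mem_admissible {i : ℕ} {c : ℤ} (h : 2 ^ ((Nat.digits 2 i).sum - 1) ∣ c) :
    monomial (2 * i) c ∈ admissible := by
  obtain ⟨e, rfl⟩ := h
  have he : monomial (2 * i) (2 ^ ((Nat.digits 2 i).sum - 1) * e) =
      e • admissibleMonomial i := by
    rw [admissibleMonomial, smul_monomial, smul_eq_mul, mul_comm e]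
  rw [he]
  exact zsmul_mem (AddSubgroup.subset_closure (Set.mem_range_self i)) e

theorem C_mem_admissible (c : ℤ) : C c ∈ admissible := by
  simpa using monomial_mem_admissible (i := 0) (c := c) (by simp)

theorem two_mul_admissibleMonomial_mul_mem (i j : ℕ) :
    2 * (admissibleMonomial i * admissibleMonomial j) ∈ admissible := by
  have h : 2 * (admissibleMonomial i * admissibleMonomial j) = monomial (2 * (i + j))
      (2 ^ ((Nat.digits 2 i).sum - 1 + ((Nat.digits 2 j).sum - 1) + 1)) := by
    rw [admissibleMonomial, admissibleMonomial, monomial_mul_monomial, ← C_ofNat, C_mul_monomial]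
    ring_nf
  rw [h]
  refine monomial_mem_admissible (pow_dvd_pow 2 ?_)
  have := Nat.digits_two_sum_add_le i j
  omega

theorem admissibleMonomial_sq_mem (i : ℕ) : admissibleMonomial i ^ 2 ∈ admissible := by
  rw [admissibleMonomial, monomial_pow, mul_right_comm, mul_assoc]
  refine monomial_mem_admissible ?_
  rw [Nat.digits_two_sum_two_mul]
  exact dvd_pow_self _ two_ne_zero

theorem two_mul_mul_mem_admissible {f g : ℤ[X]} (hf : f ∈ admissible) (hg : g ∈ admissible) :
    2 * (f * g) ∈ admissible := by
  induction hf, hg using AddSubgroup.closure_induction₂ with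
  | mem _ _ hf hg =>
    obtain ⟨i, rfl⟩ := hf
    obtain ⟨j, rfl⟩ := hg
    exact two_mul_admissibleMonomial_mul_mem i j
  | zero_left => simp
  | zero_right => simp
  | add_left _ _ _ _ _ _ hf hg => rw [add_mul, mul_add]; exact add_mem hf hg
  | add_right _ _ _ _ _ _ hf hg => rw [mul_add, mul_add]; exact add_mem hf hg
  | neg_left _ _ _ _ h => rw [neg_mul, mul_neg]; exact neg_mem h
  | neg_right _ _ _ _ h => rw [mul_neg, mul_neg]; exact neg_mem h

theorem sq_mem_admissible {f : ℤ[X]} (hf : f ∈ admissible) : f ^ 2 ∈ admissible := by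
  induction hf using AddSubgroup.closure_induction with
  | mem _ hf =>
    obtain ⟨i, rfl⟩ := hf
    exact admissibleMonomial_sq_mem i
  | zero => simp
  | add _ _ hf hg hf2 hg2 =>
    rw [add_sq, mul_assoc]
    exact add_mem (add_mem hf2 (two_mul_mul_mem_admissible hf hg)) hg2
  | neg _ _ h => rwa [neg_sq]

theorem comp_mem_of_mem_admissible {N : AddSubgroup ℤ[X]} (hC : ∀ c, C c ∈ N)
    (hN : ∀ f ∈ N, f ^ 2 ∈ N) {q : ℤ[X]} (hq : q ^ 2 ∈ N) {p : ℤ[X]} (hp : p ∈ admissible) :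
    p.comp q ∈ N := by
  refine (AddSubgroup.closure_le (K := N.comap (compRingHom q).toAddMonoidHom)).mpr ?_ hp
  rintro _ ⟨i, rfl⟩
  change (admissibleMonomial i).comp q ∈ N
  rcases eq_or_ne i 0 with rfl | hi
  · simpa [admissibleMonomial_zero] using hC 1
  · rw [admissibleMonomial, monomial_comp, pow_mul, C_pow, C_ofNat]
    exact AddSubgroup.two_pow_mul_pow_mem hN hq hi

theorem mem_admissible_iff (p : ℤ[X]) :
    p ∈ admissible ↔ (∀ i : ℕ, p.coeff (2 * i + 1) = 0) ∧
      ∀ i : ℕ, 1 ≤ i → (2 : ℤ) ^ ((Nat.digits 2 i).sum - 1) ∣ p.coeff (2 * i) := by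
  constructor
  · intro hp
    induction hp using AddSubgroup.closure_induction with
    | mem _ hf =>
      obtain ⟨j, rfl⟩ := hf
      refine ⟨fun i => by rw [admissibleMonomial, coeff_monomial, if_neg (by omega)], fun i _ => ?_⟩
      rw [admissibleMonomial, coeff_monomial]
      split_ifs with h
      · rw [show j = i by omega]
      · exact dvd_zero _
    | zero => simp
    | add _ _ _ _ hf hg =>
      exact ⟨fun i => by simp [hf.1, hg.1],
        fun i hi => by simpa using dvd_add (hf.2 i hi) (hg.2 i hi)⟩
    | neg _ _ hf => exact ⟨fun i => by simp [hf.1], fun i hi => by simpa using hf.2 i hi⟩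
  · rintro ⟨hodd, heven⟩
    rw [p.as_sum_support]
    refine sum_mem fun n _ => ?_
    obtain ⟨i, rfl | rfl⟩ := n.even_or_odd'
    · rcases eq_or_ne i 0 with rfl | hi
      · exact monomial_mem_admissible (by simp)
      · exact monomial_mem_admissible (heven i (by omega))
    · rw [hodd, monomial_zero_right]
      exact zero_mem _

def NRGen.addSubgroup (S : Set ℤ[X]) : AddSubgroup ℤ[X] where
  carrier := {p | NRGen S p}
  add_mem' := NRGen.add
  zero_mem' := NRGen.zero
  neg_mem' := NRGen.neg

@[simp]
theorem NRGen.mem_addSubgroup {S : Set ℤ[X]} {p : ℤ[X]} : p ∈ NRGen.addSubgroup S ↔ NRGen S p :=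
  Iff.rfl

theorem NRGen.mem_admissible {p : ℤ[X]} (h : NRGen {1, X ^ 2} p) : p ∈ admissible := by
  induction h with
  | mem h =>
    rcases h with rfl | rfl
    · exact admissibleMonomial_zero ▸ AddSubgroup.subset_closure (Set.mem_range_self 0)
    · exact admissibleMonomial_one ▸ AddSubgroup.subset_closure (Set.mem_range_self 1)
  | zero => exact zero_mem _
  | add _ _ hp hq => exact add_mem hp hq
  | neg _ hp => exact neg_mem hp
  | comp _ _ hp hq =>
    exact comp_mem_of_mem_admissible C_mem_admissible (fun _ => sq_mem_admissible)
      (sq_mem_admissible hq) hp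

theorem NRGen.of_mem_admissible {p : ℤ[X]} (hp : p ∈ admissible) : NRGen {1, X ^ 2} p := by
  have hX2 : NRGen {1, X ^ 2} (X ^ 2) := NRGen.mem (by simp)
  have hC (c : ℤ) : NRGen {1, X ^ 2} (C c) := by
    simpa using (NRGen.addSubgroup _).zsmul_mem (NRGen.mem (Set.mem_insert 1 _)) c
  have hsq (f : ℤ[X]) (hf : NRGen {1, X ^ 2} f) : NRGen {1, X ^ 2} (f ^ 2) := by
    simpa using hX2.comp hf
  simpa using comp_mem_of_mem_admissible (N := NRGen.addSubgroup _) hC hsq hX2 hp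

theorem mem_gen_1_x2 (p : Polynomial ℤ) :
    NRGen {1, X ^ 2} p ↔
      (∀ i : ℕ, p.coeff (2 * i + 1) = 0) ∧
        ∀ i : ℕ, 1 ≤ i → (2 : ℤ) ^ ((Nat.digits 2 i).sum - 1) ∣ p.coeff (2 * i) := by
  rw [← mem_admissible_iff]
  exact ⟨NRGen.mem_admissible, NRGen.of_mem_admissible⟩
end
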